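/- The generating function of A₁-type Macdonald polynomials holds as an identity of formal power series in z: Σ_{n≥0} M_n(x; q, t)·((t²;q²)_n/(q²;q²)_n)·z^n = (t²xz; q²)_∞ (t²x⁻¹z; q²)_∞ / ((xz; q²)_∞ (x⁻¹z; q²)_∞). -/

import Mathlib

/-!
With `cₙ = (a;Q)ₙ/(Q;Q)ₙ`, `a = t²`, `Q = q²`, the factor `(t²;q²)ₙ/(q²;q²)ₙ` cancels the
normalisation of `Mₙ`, and `Mₙ (t²;q²)ₙ/(q²;q²)ₙ zⁿ = ∑_{j+k=n} cⱼ (xz)ʲ cₖ (x⁻¹z)ᵏ`. So the left side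
is the Cauchy product of `S(xz)` and `S(x⁻¹z)`, where `S(u) = ∑ cₙ uⁿ`, and the claim is two
instances of the q-binomial theorem `S(u) = (au;Q)_∞ / (u;Q)_∞`. That follows from the functional
equation `(1 - u) S(u) = (1 - au) S(Qu)`, iterated `m` times, together with `S(Qᵐu) → 1`.
-/

/-- The finite q-Pochhammer symbol `(a;q)_n = ∏_{j=0}^{n-1} (1 − a q^j)`. -/
noncomputable def qPoch (a q : ℂ) (n : ℕ) : ℂ := ∏ j ∈ Finset.range n, (1 - a * q ^ j)

/-- The `A₁`-type Macdonald polynomial. -/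
noncomputable def macdonaldA1 (n : ℕ) (x q t : ℂ) : ℂ :=
  qPoch (q ^ 2) (q ^ 2) n / qPoch (t ^ 2) (q ^ 2) n *
    ∑ j ∈ Finset.range (n + 1),
      qPoch (t ^ 2) (q ^ 2) j * qPoch (t ^ 2) (q ^ 2) (n - j) /
          (qPoch (q ^ 2) (q ^ 2) j * qPoch (q ^ 2) (q ^ 2) (n - j)) *
        x ^ ((j : ℤ) - ((n : ℤ) - (j : ℤ)))

open Filter Finset Topology

noncomputable def qBinomialSeriesCoeff (a Q : ℂ) (n : ℕ) : ℂ := qPoch a Q n / qPoch Q Q n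

noncomputable def qBinomialSeries (a Q u : ℂ) : ℂ := ∑' n, qBinomialSeriesCoeff a Q n * u ^ n

lemma qPoch_succ (a Q : ℂ) (n : ℕ) : qPoch a Q (n + 1) = qPoch a Q n * (1 - a * Q ^ n) :=
  prod_range_succ _ n

lemma one_sub_ne_zero_of_norm_lt_one {w : ℂ} (hw : ‖w‖ < 1) : 1 - w ≠ 0 := by
  intro h
  rw [← sub_eq_zero.mp h, norm_one] at hw
  exact hw.false

lemma norm_mul_pow_lt_one {w Q : ℂ} (hw : ‖w‖ < 1) (hQ : ‖Q‖ ≤ 1) (n : ℕ) :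
    ‖w * Q ^ n‖ < 1 := by
  rw [norm_mul, norm_pow]
  exact (mul_le_of_le_one_right (norm_nonneg w) (pow_le_one₀ (norm_nonneg Q) hQ)).trans_lt hw

lemma summable_norm_neg_mul_pow (w : ℂ) {Q : ℂ} (hQ : ‖Q‖ < 1) :
    Summable fun n => ‖-(w * Q ^ n)‖ := by
  simpa [norm_mul, norm_pow] using (summable_geometric_of_lt_one (norm_nonneg Q) hQ).mul_left ‖w‖

lemma multipliable_one_sub_mul_pow {w Q : ℂ} (hQ : ‖Q‖ < 1) :
    Multipliable fun n => 1 - w * Q ^ n := by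
  simpa [sub_eq_add_neg] using multipliable_one_add_of_summable (summable_norm_neg_mul_pow w hQ)

lemma tprod_one_sub_mul_pow_ne_zero {w Q : ℂ} (hw : ‖w‖ < 1) (hQ : ‖Q‖ < 1) :
    ∏' n, (1 - w * Q ^ n) ≠ 0 := by
  have hfactor (n : ℕ) : 1 + -(w * Q ^ n) ≠ 0 := by
    simpa [sub_eq_add_neg] using one_sub_ne_zero_of_norm_lt_one (norm_mul_pow_lt_one hw hQ.le n)
  simpa [sub_eq_add_neg] using
    tprod_one_add_ne_zero_of_summable hfactor (summable_norm_neg_mul_pow w hQ)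

section QBinomial

variable {a Q : ℂ}

lemma qPoch_self_ne_zero (hQ : ‖Q‖ < 1) (n : ℕ) : qPoch Q Q n ≠ 0 :=
  prod_ne_zero_iff.mpr fun j _ => one_sub_ne_zero_of_norm_lt_one (norm_mul_pow_lt_one hQ hQ.le j)

lemma qBinomialSeriesCoeff_zero : qBinomialSeriesCoeff a Q 0 = 1 := by
  simp [qBinomialSeriesCoeff, qPoch]

lemma qBinomialSeriesCoeff_succ_mul (hQ : ‖Q‖ < 1) (n : ℕ) :
    qBinomialSeriesCoeff a Q (n + 1) * (1 - Q ^ (n + 1)) =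
      qBinomialSeriesCoeff a Q n * (1 - a * Q ^ n) := by
  have h := qPoch_self_ne_zero hQ (n + 1)
  rw [qPoch_succ] at h
  have h₀ := left_ne_zero_of_mul h
  have h₁ := right_ne_zero_of_mul h
  rw [← pow_succ'] at h₁
  simp only [qBinomialSeriesCoeff, qPoch_succ, ← pow_succ']
  field_simp

lemma qBinomialSeriesCoeff_succ (hQ : ‖Q‖ < 1) (n : ℕ) :
    qBinomialSeriesCoeff a Q (n + 1) =
      qBinomialSeriesCoeff a Q n * (1 - a * Q ^ n) / (1 - Q ^ (n + 1)) :=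
  eq_div_of_mul_eq
    (one_sub_ne_zero_of_norm_lt_one (by rw [pow_succ']; exact norm_mul_pow_lt_one hQ hQ.le n))
    (qBinomialSeriesCoeff_succ_mul hQ n)

lemma summable_norm_qBinomialSeriesCoeff_mul_pow (hQ : ‖Q‖ < 1) {u : ℂ} (hu : ‖u‖ < 1) :
    Summable fun n => ‖qBinomialSeriesCoeff a Q n * u ^ n‖ := by
  set ρ : ℕ → ℝ := fun n => ‖u‖ * ‖1 - a * Q ^ n‖ / ‖1 - Q ^ (n + 1)‖
  have hρ : Tendsto ρ atTop (𝓝 ‖u‖) := by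
    have hQn := tendsto_pow_atTop_nhds_zero_of_norm_lt_one hQ
    have hnum := ((tendsto_const_nhds (x := (1 : ℂ))).sub (hQn.const_mul a)).norm.const_mul ‖u‖
    have hden := ((tendsto_const_nhds (x := (1 : ℂ))).sub (hQn.const_mul Q)).norm
    simp only [mul_zero, sub_zero, norm_one, mul_one, ← pow_succ'] at hnum hden
    have h := hnum.div hden one_ne_zero
    rw [div_one] at h
    exact h
  obtain ⟨r, hur, hr⟩ := exists_between hu
  refine summable_of_ratio_norm_eventually_le hr ?_
  filter_upwards [hρ.eventually_le_const hur] with n hn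
  calc ‖‖qBinomialSeriesCoeff a Q (n + 1) * u ^ (n + 1)‖‖
      = ρ n * ‖‖qBinomialSeriesCoeff a Q n * u ^ n‖‖ := by
        simp only [ρ, norm_norm, qBinomialSeriesCoeff_succ hQ, norm_mul, norm_div, norm_pow]
        ring
    _ ≤ r * ‖‖qBinomialSeriesCoeff a Q n * u ^ n‖‖ := by gcongr

lemma summable_qBinomialSeriesCoeff_mul_pow (hQ : ‖Q‖ < 1) {u : ℂ} (hu : ‖u‖ < 1) :
    Summable fun n => qBinomialSeriesCoeff a Q n * u ^ n :=
  (summable_norm_qBinomialSeriesCoeff_mul_pow hQ hu).of_norm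

lemma qBinomialSeries_functional_eq (hQ : ‖Q‖ < 1) {u : ℂ} (hu : ‖u‖ < 1) :
    (1 - u) * qBinomialSeries a Q u = (1 - a * u) * qBinomialSeries a Q (Q * u) := by
  have hs := (summable_qBinomialSeriesCoeff_mul_pow (a := a) hQ hu).hasSum
  have hs' := (summable_qBinomialSeriesCoeff_mul_pow (a := a) (u := Q * u) hQ
    (by simpa [mul_comm] using norm_mul_pow_lt_one hu hQ.le 1)).hasSum
  have hdiff := hs.sub hs'
  rw [← hasSum_nat_add_iff' 1] at hdiff
  -- `S u - S (Q u) = ∑ cₙ (1 - Qⁿ) uⁿ`, and `cₙ₊₁ (1 - Qⁿ⁺¹) = cₙ (1 - a Qⁿ)` makes this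
  -- `u (S u - a S (Q u))` after shifting the index
  have hshift := (hs.mul_left u).sub (hs'.mul_left (a * u))
  refine sub_eq_zero.mp ?_
  have key := hdiff.unique (hshift.congr_fun fun n => ?_)
  · simp only [qBinomialSeries, range_one, sum_singleton, qBinomialSeriesCoeff_zero] at key ⊢
    linear_combination key
  · linear_combination u ^ (n + 1) * qBinomialSeriesCoeff_succ_mul (a := a) hQ n

lemma qBinomialSeries_mul_prod_range (hQ : ‖Q‖ < 1) {u : ℂ} (hu : ‖u‖ < 1) (m : ℕ) :
    qBinomialSeries a Q u * ∏ i ∈ range m, (1 - u * Q ^ i) =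
      (∏ i ∈ range m, (1 - a * u * Q ^ i)) * qBinomialSeries a Q (Q ^ m * u) := by
  induction m with
  | zero => simp
  | succ m ih =>
    have hfe := qBinomialSeries_functional_eq (a := a) (u := Q ^ m * u) hQ
      (by simpa [mul_comm] using norm_mul_pow_lt_one hu hQ.le m)
    rw [prod_range_succ, prod_range_succ, ← mul_assoc, ih, pow_succ', mul_assoc Q]
    linear_combination (∏ i ∈ range m, (1 - a * u * Q ^ i)) * hfe

lemma tendsto_qBinomialSeries_pow_mul (hQ : ‖Q‖ < 1) {u : ℂ} (hu : ‖u‖ < 1) :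
    Tendsto (fun m => qBinomialSeries a Q (Q ^ m * u)) atTop (𝓝 1) := by
  have hlim : Tendsto (fun m => Q ^ m * u) atTop (𝓝 0) := by
    simpa using (tendsto_pow_atTop_nhds_zero_of_norm_lt_one hQ).mul_const u
  have hsum : ∑' n, qBinomialSeriesCoeff a Q n * (0 : ℂ) ^ n = 1 := by
    rw [tsum_eq_single 0 fun n hn => by simp [hn]]
    simp [qBinomialSeriesCoeff_zero]
  rw [← hsum]
  refine tendsto_tsum_of_dominated_convergence
    (summable_norm_qBinomialSeriesCoeff_mul_pow (a := a) hQ hu)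
    (fun n => (hlim.pow n).const_mul _) (Eventually.of_forall fun m n => ?_)
  rw [mul_pow, norm_mul, norm_mul, norm_mul, norm_pow, norm_pow]
  gcongr
  exact mul_le_of_le_one_left (by positivity)
    (pow_le_one₀ (by positivity) (pow_le_one₀ (norm_nonneg _) hQ.le))

theorem qBinomialSeries_mul_tprod {u : ℂ} (hQ : ‖Q‖ < 1) (hu : ‖u‖ < 1) :
    qBinomialSeries a Q u * ∏' n, (1 - u * Q ^ n) = ∏' n, (1 - a * u * Q ^ n) := by
  have hlhs := (tendsto_const_nhds (x := qBinomialSeries a Q u)).mul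
    (multipliable_one_sub_mul_pow (w := u) hQ).hasProd.tendsto_prod_nat
  have hrhs := (multipliable_one_sub_mul_pow (w := a * u) hQ).hasProd.tendsto_prod_nat.mul
    (tendsto_qBinomialSeries_pow_mul (a := a) hQ hu)
  rw [mul_one] at hrhs
  exact tendsto_nhds_unique (hlhs.congr (qBinomialSeries_mul_prod_range hQ hu)) hrhs

end QBinomial

lemma zpow_sub_sub_eq_pow_mul_inv_pow {x : ℂ} (hx : x ≠ 0) {j n : ℕ} (hj : j ≤ n) :
    x ^ ((j : ℤ) - ((n : ℤ) - (j : ℤ))) = x ^ j * x⁻¹ ^ (n - j) := by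
  rw [← Nat.cast_sub hj, zpow_sub₀ hx, zpow_natCast, zpow_natCast, div_eq_mul_inv, inv_pow]

lemma macdonaldA1_mul_eq_sum_range {x q t : ℂ} (z : ℂ) (n : ℕ) (hx : x ≠ 0)
    (ht : qPoch (t ^ 2) (q ^ 2) n ≠ 0) (hq : qPoch (q ^ 2) (q ^ 2) n ≠ 0) :
    macdonaldA1 n x q t * (qPoch (t ^ 2) (q ^ 2) n / qPoch (q ^ 2) (q ^ 2) n) * z ^ n =
      ∑ j ∈ range (n + 1), qBinomialSeriesCoeff (t ^ 2) (q ^ 2) j * (x * z) ^ j *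
        (qBinomialSeriesCoeff (t ^ 2) (q ^ 2) (n - j) * (x⁻¹ * z) ^ (n - j)) := by
  have hcancel : qPoch (t ^ 2) (q ^ 2) n / qPoch (q ^ 2) (q ^ 2) n *
      (qPoch (q ^ 2) (q ^ 2) n / qPoch (t ^ 2) (q ^ 2) n) = 1 := by
    field_simp
  rw [macdonaldA1, show ∀ a b c d : ℂ, a * b * c * d = c * a * (b * d) from fun _ _ _ _ => by ring,
    hcancel, one_mul, sum_mul]
  refine sum_congr rfl fun j hj => ?_
  have hjn : j ≤ n := Nat.lt_succ_iff.mp (mem_range.mp hj)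
  obtain ⟨k, rfl⟩ := Nat.exists_eq_add_of_le hjn
  rw [zpow_sub_sub_eq_pow_mul_inv_pow hx hjn, Nat.add_sub_cancel_left]
  simp only [qBinomialSeriesCoeff, pow_add, mul_pow]
  ring

/-- Generating function of the `A₁`-type Macdonald polynomials:
`Σ_{n≥0} M_n(x;q,t)·((t²;q²)_n/(q²;q²)_n)·z^n
  = (t²xz;q²)_∞ (t²x⁻¹z;q²)_∞ / ((xz;q²)_∞ (x⁻¹z;q²)_∞)`,
in the convergent regime `‖q‖ < 1`, `‖xz‖ < 1`, `‖x⁻¹z‖ < 1`. -/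
theorem macdonaldA1_generating_function (x q t z : ℂ) (hx0 : x ≠ 0)
    (hq : ‖q‖ < 1) (hxz : ‖x * z‖ < 1) (hxz' : ‖x⁻¹ * z‖ < 1)
    (htp : ∀ m : ℕ, qPoch (t ^ 2) (q ^ 2) m ≠ 0) :
    ∑' n : ℕ, macdonaldA1 n x q t * (qPoch (t ^ 2) (q ^ 2) n / qPoch (q ^ 2) (q ^ 2) n) * z ^ n =
      (∏' i : ℕ, (1 - t ^ 2 * x * z * (q ^ 2) ^ i)) *
          (∏' i : ℕ, (1 - t ^ 2 * x⁻¹ * z * (q ^ 2) ^ i)) /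
        ((∏' i : ℕ, (1 - x * z * (q ^ 2) ^ i)) * (∏' i : ℕ, (1 - x⁻¹ * z * (q ^ 2) ^ i))) := by
  have hQ : ‖q ^ 2‖ < 1 := by simpa using pow_lt_one₀ (norm_nonneg q) hq two_ne_zero
  rw [tsum_congr fun n => macdonaldA1_mul_eq_sum_range z n hx0 (htp n) (qPoch_self_ne_zero hQ n),
    ← tsum_mul_tsum_eq_tsum_sum_range_of_summable_norm
      (summable_norm_qBinomialSeriesCoeff_mul_pow hQ hxz)
      (summable_norm_qBinomialSeriesCoeff_mul_pow hQ hxz'),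
    eq_div_iff (mul_ne_zero (tprod_one_sub_mul_pow_ne_zero hxz hQ)
      (tprod_one_sub_mul_pow_ne_zero hxz' hQ))]
  have h₁ := qBinomialSeries_mul_tprod (a := t ^ 2) hQ hxz
  have h₂ := qBinomialSeries_mul_tprod (a := t ^ 2) hQ hxz'
  simp only [qBinomialSeries, mul_assoc] at h₁ h₂ ⊢
  rw [← h₁, ← h₂]
  ring
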